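/- Let θᵢⱼ satisfy the unitarity conditions with θ₁₁ and θ₁₂ not proportional (not scalar multiples of a common function). Then the invariant subspace Y = {(θ₂₁u₁+θ₂₂u₂) ⊕ P₋(\overline{θ₁₁}u₁+\overline{θ₁₂}u₂) : u₁,u₂ ∈ H²} does not split: it is not of the form X ⊕ X′ with X ⊆ H² and X′ ⊆ H²₋. -/

import Mathlib

open MeasureTheory Complex Real
open scoped ComplexConjugate ENNReal

noncomputable section

namespace SS

abbrev T : ℝ := 2 * Real.pi

instance : Fact (0 < T) := ⟨by positivity⟩

/-- Normalized Haar (Lebesgue) measure on the circle. -/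
abbrev μ : Measure (AddCircle T) := AddCircle.haarAddCircle

/-- The space `L²` of the circle. -/
abbrev L2 := Lp ℂ 2 μ

/-- The Hardy space `H²`: the closed span of the nonnegative Fourier modes. -/
def H2 : Submodule ℂ L2 :=
  (Submodule.span ℂ {f : L2 | ∃ n : ℕ, f = fourierLp 2 (n : ℤ)}).topologicalClosure

instance : CompleteSpace H2 :=
  (Submodule.isClosed_topologicalClosure _).completeSpace_coe

/-- `H²₋ = L² ⊖ H²`. -/
def H2m : Submodule ℂ L2 := H2ᗮ

instance : CompleteSpace H2m :=
  (Submodule.isClosed_orthogonal H2).completeSpace_coe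

/-- Orthogonal projection `P₊` of `L²` onto `H²`, seen as an operator on `L²`. -/
def Pplus : L2 →ₗ[ℂ] L2 := H2.subtype.comp (Submodule.orthogonalProjectionOnto H2).toLinearMap

/-- Orthogonal projection `P₋` of `L²` onto `H²₋`, seen as an operator on `L²`. -/
def Pminus : L2 →ₗ[ℂ] L2 := H2m.subtype.comp (Submodule.orthogonalProjectionOnto H2m).toLinearMap

theorem memL2_mul_of_bound {φ : AddCircle T → ℂ} (hm : AEStronglyMeasurable φ μ)
    {C : ℝ} (hb : ∀ᵐ t ∂μ, ‖φ t‖ ≤ C) (f : L2) :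
    MemLp (fun t => φ t * (f : AddCircle T → ℂ) t) 2 μ := by
  have h1 : MemLp φ ∞ μ := memLp_top_of_bound hm C hb
  simpa [smul_eq_mul] using (Lp.memLp f).mul' (r := 2) h1

/-- Multiplication by a bounded measurable function, as an operator on `L²`. -/
def mulOp (φ : AddCircle T → ℂ) (hm : AEStronglyMeasurable φ μ)
    {C : ℝ} (hb : ∀ᵐ t ∂μ, ‖φ t‖ ≤ C) : L2 →ₗ[ℂ] L2 where
  toFun f := (memL2_mul_of_bound hm hb f).toLp _
  map_add' f g := by
    apply Lp.ext
    filter_upwards [MemLp.coeFn_toLp (memL2_mul_of_bound hm hb (f + g)),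
      MemLp.coeFn_toLp (memL2_mul_of_bound hm hb f),
      MemLp.coeFn_toLp (memL2_mul_of_bound hm hb g),
      Lp.coeFn_add ((memL2_mul_of_bound hm hb f).toLp _)
        ((memL2_mul_of_bound hm hb g).toLp _),
      Lp.coeFn_add f g] with t h1 h2 h3 h4 h5
    simp only [h1, h4, Pi.add_apply, h2, h3, h5]
    ring
  map_smul' c f := by
    apply Lp.ext
    filter_upwards [MemLp.coeFn_toLp (memL2_mul_of_bound hm hb (c • f)),
      MemLp.coeFn_toLp (memL2_mul_of_bound hm hb f),
      Lp.coeFn_smul c ((memL2_mul_of_bound hm hb f).toLp _),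
      Lp.coeFn_smul c f] with t h1 h2 h3 h4
    simp only [RingHom.id_apply, h1, h3, Pi.smul_apply, h2, h4, smul_eq_mul]
    ring

/-- The function `e^{it}` on the circle. -/
def φz : AddCircle T → ℂ := fun t => fourier 1 t

theorem φz_meas : AEStronglyMeasurable φz μ := (fourier 1).continuous.aestronglyMeasurable

theorem φz_bound : ∀ᵐ t ∂μ, ‖φz t‖ ≤ 1 :=
  Filter.Eventually.of_forall fun t => le_of_eq (Circle.norm_coe _)

/-- Multiplication by `z = e^{it}` on `L²`. -/
def Mz : L2 →ₗ[ℂ] L2 := mulOp φz φz_meas φz_bound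

/-- The operator `S ⊕ S₊` on `L² = H² ⊕ H²₋` (internal orthogonal decomposition):
it acts as `Mz` on the `H²`-component and as `P₋ Mz` on the `H²₋`-component. -/
def D : L2 →ₗ[ℂ] L2 := Mz.comp Pplus + (Pminus.comp (Mz.comp Pminus))

/-- The set `φ·M ⊆ L²`, for a function `φ` on the circle and a set `M ⊆ L²`,
defined via a.e. representatives. -/
def mulSet (φ : AddCircle T → ℂ) (M : Set L2) : Set L2 :=
  {g | ∃ f ∈ M, ⇑g =ᵐ[μ] fun t => φ t * f t}

/-- The model space `K_θ = H² ⊖ θH²`, as a subset of `L²`. -/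
def Kset (θ : AddCircle T → ℂ) : Set L2 :=
  {f | f ∈ H2 ∧ ∀ g ∈ mulSet θ (H2 : Set L2), inner (𝕜 := ℂ) g f = 0}

/-- `θ` is (the boundary function of) an inner function: it is measurable, its negative
Fourier coefficients vanish (i.e. it belongs to `H²`, hence to `H^∞`), and it has
unimodular boundary values a.e. -/
structure IsInner (θ : AddCircle T → ℂ) : Prop where
  meas : AEStronglyMeasurable θ μ
  coeff : ∀ n : ℤ, n < 0 → fourierCoeff θ n = 0
  unimod : ∀ᵐ t ∂μ, ‖θ t‖ = 1

/-- `φ` is (the boundary function of) an element of the closed unit ball of `H^∞`. -/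
structure MemBallHinf (φ : AddCircle T → ℂ) : Prop where
  meas : AEStronglyMeasurable φ μ
  coeff : ∀ n : ℤ, n < 0 → fourierCoeff φ n = 0
  bound : ∀ᵐ t ∂μ, ‖φ t‖ ≤ 1

theorem IsInner.memBall {θ : AddCircle T → ℂ} (h : IsInner θ) : MemBallHinf θ :=
  ⟨h.meas, h.coeff, h.unimod.mono fun _ ht => le_of_eq ht⟩

theorem aeNeg {g g' : AddCircle T → ℂ} (h : g =ᵐ[μ] g') :
    (fun t => g (-t)) =ᵐ[μ] fun t => g' (-t) :=
  (Measure.measurePreserving_neg μ).quasiMeasurePreserving.ae_eq_comp h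

theorem memL2_J (f : L2) :
    MemLp (fun t => (fourier (-1) t : ℂ) * (f : L2) (-t)) 2 μ := by
  have h1 : MemLp (fun t : AddCircle T => (f : L2) (-t)) 2 μ :=
    (Lp.memLp f).comp_measurePreserving (Measure.measurePreserving_neg μ)
  have h2 : MemLp (fun t : AddCircle T => (fourier (-1) t : ℂ)) ∞ μ :=
    memLp_top_of_bound (fourier (-1)).continuous.aestronglyMeasurable 1
      (Filter.Eventually.of_forall fun _ => le_of_eq (Circle.norm_coe _))
  simpa [smul_eq_mul] using h1.mul' (r := 2) h2

/-- The operator `J` on `L²`: `(Jf)(e^{it}) = e^{-it} f(e^{-it})`. -/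
def Jop : L2 →ₗ[ℂ] L2 where
  toFun f := (memL2_J f).toLp _
  map_add' f g := by
    apply Lp.ext
    filter_upwards [MemLp.coeFn_toLp (memL2_J (f + g)), MemLp.coeFn_toLp (memL2_J f),
      MemLp.coeFn_toLp (memL2_J g),
      Lp.coeFn_add ((memL2_J f).toLp _) ((memL2_J g).toLp _),
      aeNeg (Lp.coeFn_add f g)] with t h1 h2 h3 h4 h5
    simp only [h1, h4, Pi.add_apply, h2, h3, h5]
    ring
  map_smul' c f := by
    apply Lp.ext
    filter_upwards [MemLp.coeFn_toLp (memL2_J (c • f)), MemLp.coeFn_toLp (memL2_J f),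
      Lp.coeFn_smul c ((memL2_J f).toLp _),
      aeNeg (Lp.coeFn_smul c f)] with t h1 h2 h3 h4
    simp only [RingHom.id_apply, h1, h3, Pi.smul_apply, h2, h4, smul_eq_mul]
    ring

/-- The subspace `Y = {(θ₂₁u₁+θ₂₂u₂) ⊕ P₋(conj θ₁₁ u₁ + conj θ₁₂ u₂) : u₁,u₂ ∈ H²}`
inside `L² = H² ⊕ H²₋` (internal orthogonal decomposition). -/
def YSet (θ11 θ12 θ21 θ22 : AddCircle T → ℂ) : Set L2 :=
  {y | ∃ u1 ∈ (H2 : Set L2), ∃ u2 ∈ (H2 : Set L2), ∃ g h : L2, g ∈ H2 ∧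
    (⇑g =ᵐ[μ] fun t => θ21 t * u1 t + θ22 t * u2 t) ∧
    (⇑h =ᵐ[μ] fun t => (starRingEnd ℂ) (θ11 t) * u1 t + (starRingEnd ℂ) (θ12 t) * u2 t) ∧
    y = g + Pminus h}

/-- `g` is (the boundary function of) an outer function:
`log |g(0)| = ∫ log |g| dm`, where `g(0)` is the 0-th Fourier coefficient. -/
structure IsOuter (g : AddCircle T → ℂ) : Prop where
  meas : AEStronglyMeasurable g μ
  coeff : ∀ n : ℤ, n < 0 → fourierCoeff g n = 0
  ne_zero : ¬ g =ᵐ[μ] 0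
  outer : Real.log ‖fourierCoeff g 0‖ = ∫ t, Real.log ‖g t‖ ∂μ


-- ===================== auxiliary lemmas =====================

lemma fourierCoeff_inner (f : L2) (n : ℤ) :
    fourierCoeff (⇑f) n = inner (𝕜 := ℂ) (fourierLp 2 n : L2) f := by
  rw [← fourierBasis_repr, HilbertBasis.repr_apply_apply, coe_fourierBasis]

lemma fourierCoeff_congr_ae {f g : AddCircle T → ℂ} (h : f =ᵐ[μ] g) (n : ℤ) :
    fourierCoeff f n = fourierCoeff g n := by
  simp only [fourierCoeff]
  exact integral_congr_ae (h.mono fun t ht => by simp only [ht])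

lemma memL2_of_bound {φ : AddCircle T → ℂ} (hm : AEStronglyMeasurable φ μ) (C : ℝ)
    (hb : ∀ᵐ t ∂μ, ‖φ t‖ ≤ C) : MemLp φ 2 μ :=
  (memLp_top_of_bound hm C hb).mono_exponent le_top

lemma inner_H2_eq_zero {q : L2} (hq : ∀ m : ℕ, inner (𝕜 := ℂ) q (fourierLp 2 (m : ℤ) : L2) = 0)
    {g : L2} (hg : g ∈ H2) : inner (𝕜 := ℂ) q g = 0 := by
  have hker : H2 ≤ (innerSL ℂ q).ker := by
    apply Submodule.topologicalClosure_minimal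
    · rw [Submodule.span_le]
      rintro f ⟨m, rfl⟩
      simpa using hq m
    · exact ContinuousLinearMap.isClosed_ker (innerSL ℂ q)
  simpa using hker hg

lemma coeff_zero_of_mem_H2 {f : L2} (hf : f ∈ H2) {n : ℤ} (hn : n < 0) :
    fourierCoeff (⇑f) n = 0 := by
  rw [fourierCoeff_inner]
  refine inner_H2_eq_zero (fun m => ?_) hf
  have h := orthonormal_iff_ite.mp (orthonormal_fourier (T := T)) n (m : ℤ)
  rw [h, if_neg]
  omega

lemma mem_H2_of_coeff {f : L2} (h : ∀ n : ℤ, n < 0 → fourierCoeff (⇑f) n = 0) : f ∈ H2 := by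
  have hsum := (fourierBasis (T := T) (hT := ⟨by positivity⟩)).hasSum_repr f
  refine mem_closure_of_tendsto hsum (Filter.Eventually.of_forall fun s => ?_)
  refine Submodule.sum_mem _ fun i _ => ?_
  rcases lt_or_ge i 0 with hi | hi
  · have : fourierBasis.repr f i = 0 := by rw [fourierBasis_repr]; exact h i hi
    rw [this, zero_smul]; exact Submodule.zero_mem _
  · refine Submodule.smul_mem _ _ (Submodule.subset_span ⟨i.toNat, ?_⟩)
    rw [← coe_fourierBasis]
    congr 1
    omega


lemma fourierCoeff_coe_add (f g : L2) (n : ℤ) :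
    fourierCoeff (⇑(f + g)) n = fourierCoeff (⇑f) n + fourierCoeff (⇑g) n := by
  rw [fourierCoeff_inner, fourierCoeff_inner, fourierCoeff_inner, inner_add_right]

lemma fourierCoeff_conj (f : AddCircle T → ℂ) (n : ℤ) :
    fourierCoeff (fun t => conj (f t)) n = conj (fourierCoeff f (-n)) := by
  simp only [fourierCoeff, neg_neg]
  rw [← integral_conj]
  refine integral_congr_ae (Filter.Eventually.of_forall fun t => ?_)
  simp only [smul_eq_mul, map_mul, ← fourier_neg, neg_neg]

/-- Negative Fourier coefficients of `φ * k` vanish for `φ` in the ball of `H^∞`, `k ∈ H²`. -/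
lemma coeff_mul_zero {φ : AddCircle T → ℂ} (hφ : MemBallHinf φ) {k : L2}
    (hk : k ∈ H2) {n : ℤ} (hn : n < 0) :
    fourierCoeff (fun t => φ t * (k : AddCircle T → ℂ) t) n = 0 := by
  have hqm : AEStronglyMeasurable (fun t => conj (φ t) * (fourier n t : ℂ)) μ := by
    refine AEStronglyMeasurable.mul ?_ (fourier n).continuous.aestronglyMeasurable
    exact Complex.continuous_conj.comp_aestronglyMeasurable hφ.meas
  have hqb : ∀ᵐ t ∂μ, ‖conj (φ t) * (fourier n t : ℂ)‖ ≤ 1 := by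
    filter_upwards [hφ.bound] with t ht
    have h2 : ‖(fourier n t : ℂ)‖ = 1 := Circle.norm_coe _
    rw [norm_mul, RCLike.norm_conj, h2, mul_one]
    exact ht
  set q : L2 := (memL2_of_bound hqm 1 hqb).toLp _ with hq
  have hqcoe : ⇑q =ᵐ[μ] fun t => conj (φ t) * (fourier n t : ℂ) := MemLp.coeFn_toLp _
  have key : ∀ f : L2, inner (𝕜 := ℂ) q f = ∫ t, (fourier (-n) t : ℂ) * φ t * f t ∂μ := by
    intro f
    rw [MeasureTheory.L2.inner_def]
    refine integral_congr_ae ?_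
    filter_upwards [hqcoe] with t ht
    rw [RCLike.inner_apply, ht]
    simp only [map_mul, RingHom.id_apply, Complex.conj_conj, ← fourier_neg]
    ring
  have horth : inner (𝕜 := ℂ) q k = 0 := by
    refine inner_H2_eq_zero (fun m => ?_) hk
    rw [key]
    have : ∫ t, (fourier (-n) t : ℂ) * φ t * (fourierLp 2 (m : ℤ) : L2) t ∂μ
        = fourierCoeff φ (n - m) := by
      simp only [fourierCoeff, smul_eq_mul, neg_sub]
      refine integral_congr_ae ?_
      filter_upwards [coeFn_fourierLp 2 (m : ℤ) (T := T)] with t ht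
      rw [ht]
      have h3 : ((m : ℤ) - n) = -n + m := by ring
      rw [h3, fourier_add]; ring
    rw [this, hφ.coeff _ (by omega)]
  rw [← horth, key]
  simp only [fourierCoeff, smul_eq_mul]
  exact integral_congr_ae (Filter.Eventually.of_forall fun t => by ring)

/-- An `L²` function whose nonzero Fourier coefficients vanish is a.e. constant. -/
lemma ae_const_of_coeff {ψ : AddCircle T → ℂ} (hm : MemLp ψ 2 μ)
    (h : ∀ n : ℤ, n ≠ 0 → fourierCoeff ψ n = 0) :
    ∃ c : ℂ, ψ =ᵐ[μ] fun _ => c := by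
  classical
  set f : L2 := hm.toLp ψ with hf
  have hcoe : ⇑f =ᵐ[μ] ψ := MemLp.coeFn_toLp _
  set c : ℂ := fourierCoeff ψ 0 with hc
  set e0 : L2 := fourierLp 2 (0 : ℤ) with he0
  have he0b : e0 = fourierBasis (T := T) (hT := ⟨by positivity⟩) (0 : ℤ) := by
    rw [he0]; exact congrFun (coe_fourierBasis (T := T)).symm 0
  have hfc : f = c • e0 := by
    apply (fourierBasis (T := T)).repr.injective
    apply lp.ext
    funext m
    rw [LinearIsometryEquiv.map_smul, lp.coeFn_smul, Pi.smul_apply, he0b,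
      HilbertBasis.repr_self, fourierBasis_repr, fourierCoeff_congr_ae hcoe]
    by_cases hm0 : m = 0
    · subst hm0
      rw [lp.single_apply_self]
      simp [hc]
    · rw [h m hm0, lp.single_apply_ne 2 0 _ hm0]
      simp
  have : ⇑f =ᵐ[μ] fun _ => c := by
    rw [hfc]
    filter_upwards [Lp.coeFn_smul c e0, coeFn_fourierLp 2 (0 : ℤ) (T := T)] with t h1 h2
    rw [h1]
    simp only [Pi.smul_apply, smul_eq_mul, he0]
    rw [h2, fourier_zero, mul_one]
  exact ⟨c, hcoe.symm.trans this⟩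


lemma Pminus_mem (h : L2) : Pminus h ∈ H2m := SetLike.coe_mem _

lemma decomp_unique {g g' m m' : L2} (hg : g ∈ H2) (hg' : g' ∈ H2) (hm : m ∈ H2m)
    (hm' : m' ∈ H2m) (he : g + m = g' + m') : g = g' ∧ m = m' := by
  have hx : g - g' = m' - m := by
    rw [sub_eq_sub_iff_add_eq_add, he]
    exact add_comm _ _
  have h1 : g - g' ∈ H2 := sub_mem hg hg'
  have h2 : g - g' ∈ H2ᗮ := by
    rw [hx]
    exact sub_mem hm' hm
  have h0 : g - g' = 0 := by
    have := (Submodule.mem_orthogonal H2 (g - g')).mp h2 _ h1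
    rwa [inner_self_eq_zero] at this
  refine ⟨sub_eq_zero.mp h0, ?_⟩
  exact (sub_eq_zero.mp (hx ▸ h0)).symm

lemma sub_mem_H2_of_Pminus_eq {h h' : L2} (he : Pminus h = Pminus h') : h - h' ∈ H2 := by
  have : Submodule.orthogonalProjectionOnto H2m h = Submodule.orthogonalProjectionOnto H2m h' :=
    Subtype.coe_injective he
  have h0 : Submodule.orthogonalProjectionOnto H2m (h - h') = 0 := by
    rw [map_sub, this, sub_self]
  have : h - h' ∈ H2mᗮ := Submodule.orthogonalProjectionOnto_eq_zero_iff.mp h0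
  rwa [H2m, Submodule.orthogonal_orthogonal] at this

lemma conj_mul_self (z : ℂ) : conj z * z = ((‖z‖ ^ 2 : ℝ) : ℂ) := by
  rw [mul_comm, Complex.mul_conj]
  norm_cast
  rw [Complex.normSq_eq_norm_sq]


lemma fourierCoeff_fun_add {f g : AddCircle T → ℂ} (hf : MemLp f 2 μ) (hg : MemLp g 2 μ)
    (n : ℤ) :
    fourierCoeff (fun t => f t + g t) n = fourierCoeff f n + fourierCoeff g n := by
  have h1 := fourierCoeff_coe_add (hf.toLp f) (hg.toLp g) n
  have e1 : ⇑(hf.toLp f + hg.toLp g) =ᵐ[μ] fun t => f t + g t := by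
    filter_upwards [Lp.coeFn_add (hf.toLp f) (hg.toLp g), hf.coeFn_toLp, hg.coeFn_toLp]
      with t ht h2 h3
    simp only [ht, Pi.add_apply, h2, h3]
  rw [fourierCoeff_congr_ae e1, fourierCoeff_congr_ae hf.coeFn_toLp,
    fourierCoeff_congr_ae hg.coeFn_toLp] at h1
  exact h1

lemma ptwise {a b c d w1 w2 : ℂ} (h2 : ‖c‖ ^ 2 + ‖d‖ ^ 2 = 1) (h3 : a * c + b * d = 0)
    (hw : c * w1 + d * w2 = 0) : b * w1 = a * w2 := by
  have hcd : c ≠ 0 ∨ d ≠ 0 := by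
    by_contra hc
    push_neg at hc
    rw [hc.1, hc.2] at h2
    simp at h2
  have e1 : c * (b * w1 - a * w2) = 0 := by linear_combination b * hw - w2 * h3
  have e2 : d * (b * w1 - a * w2) = 0 := by linear_combination w1 * h3 - a * hw
  rcases hcd with hc | hd
  · have := (mul_eq_zero.mp e1).resolve_left hc
    linear_combination this
  · have := (mul_eq_zero.mp e2).resolve_left hd
    linear_combination this

/-- if `θ₁₁, θ₁₂` are not proportional then `Y` does not split. -/
theorem stmt12_nonsplitting (θ11 θ12 θ21 θ22 : AddCircle T → ℂ)
    (h11 : MemBallHinf θ11) (h12 : MemBallHinf θ12)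
    (h21 : MemBallHinf θ21) (h22 : MemBallHinf θ22)
    (hu1 : ∀ᵐ t ∂μ, ‖θ11 t‖ ^ 2 + ‖θ12 t‖ ^ 2 = 1)
    (hu2 : ∀ᵐ t ∂μ, ‖θ21 t‖ ^ 2 + ‖θ22 t‖ ^ 2 = 1)
    (hu3 : ∀ᵐ t ∂μ, θ11 t * θ21 t + θ12 t * θ22 t = 0)
    (hnp1 : ∀ c : ℂ, ¬ θ12 =ᵐ[μ] fun t => c * θ11 t)
    (hnp2 : ∀ c : ℂ, ¬ θ11 =ᵐ[μ] fun t => c * θ12 t) :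
    ¬ ∃ X X' : Set L2, X ⊆ (H2 : Set L2) ∧ X' ⊆ (H2m : Set L2) ∧
        YSet θ11 θ12 θ21 θ22 = {y : L2 | ∃ x ∈ X, ∃ x' ∈ X', y = x + x'} := by
  rintro ⟨X, X', hX, hX', hY⟩
  have hconj11 : AEStronglyMeasurable (fun t => conj (θ11 t)) μ :=
    Complex.continuous_conj.comp_aestronglyMeasurable h11.meas
  have hconj12 : AEStronglyMeasurable (fun t => conj (θ12 t)) μ :=
    Complex.continuous_conj.comp_aestronglyMeasurable h12.meas
  -- the constant-one element of H²
  set e0 : L2 := fourierLp 2 (0 : ℤ) with he0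
  have he0H : e0 ∈ H2 :=
    Submodule.le_topologicalClosure _ (Submodule.subset_span ⟨0, by norm_num [he0]⟩)
  have he0coe : ⇑e0 =ᵐ[μ] fun _ => (1 : ℂ) := by
    filter_upwards [coeFn_fourierLp 2 (0 : ℤ) (T := T)] with t ht
    rw [ht, fourier_zero]
  -- 0 ∈ X
  have h0Y : (0 : L2) ∈ YSet θ11 θ12 θ21 θ22 := by
    refine ⟨0, H2.zero_mem, 0, H2.zero_mem, 0, 0, H2.zero_mem, ?_, ?_,
      by rw [map_zero, add_zero]⟩ <;>
    · filter_upwards [Lp.coeFn_zero (E := ℂ) (p := 2) (μ := μ)] with t ht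
      simp [ht]
  have h0mem : (0 : L2) ∈ {y : L2 | ∃ x ∈ X, ∃ x' ∈ X', y = x + x'} := hY ▸ h0Y
  obtain ⟨x0, hx0, x0', hx0', hxe0⟩ := h0mem
  obtain ⟨hx01, -⟩ := decomp_unique H2.zero_mem (hX hx0) H2m.zero_mem (hX' hx0')
    (by simpa using hxe0)
  have h0X : (0 : L2) ∈ X := hx01 ▸ hx0
  -- master step
  have master : ∀ h g : L2, g ∈ H2 →
      (∃ u1 ∈ (H2 : Set L2), ∃ u2 ∈ (H2 : Set L2),
        (⇑g =ᵐ[μ] fun t => θ21 t * u1 t + θ22 t * u2 t) ∧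
        (⇑h =ᵐ[μ] fun t => conj (θ11 t) * u1 t + conj (θ12 t) * u2 t)) →
      ∀ n : ℤ, n < 0 →
        fourierCoeff (fun t => θ11 t * (h : AddCircle T → ℂ) t) n = 0 ∧
        fourierCoeff (fun t => θ12 t * (h : AddCircle T → ℂ) t) n = 0 := by
    rintro h g hgH ⟨u1, hu1H, u2, hu2H, hgeq, hheq⟩
    have hyY : g + Pminus h ∈ YSet θ11 θ12 θ21 θ22 :=
      ⟨u1, hu1H, u2, hu2H, g, h, hgH, hgeq, hheq, rfl⟩
    rw [hY] at hyY
    obtain ⟨x, hx, x', hx', hxe⟩ := hyY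
    obtain ⟨-, hPm⟩ := decomp_unique hgH (hX hx) (Pminus_mem h) (hX' hx') hxe
    have hyA : (0 : L2) + x' ∈ {y : L2 | ∃ x ∈ X, ∃ x' ∈ X', y = x + x'} :=
      ⟨0, h0X, x', hx', rfl⟩
    rw [← hY] at hyA
    obtain ⟨v1, hv1H, v2, hv2H, g', h', hg'H, hg'eq, hh'eq, he'⟩ := hyA
    obtain ⟨hg'0, hPm'⟩ := decomp_unique H2.zero_mem hg'H (hX' hx') (Pminus_mem h') he'
    have hkH : h' - h ∈ H2 := sub_mem_H2_of_Pminus_eq (by rw [← hPm', ← hPm])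
    set k : L2 := h' - h with hk
    -- a.e. identities
    have E1 : ∀ᵐ t ∂μ, θ21 t * (v1 : AddCircle T → ℂ) t + θ22 t * (v2 : AddCircle T → ℂ) t = 0 := by
      have hg'c : ⇑g' =ᵐ[μ] fun _ => (0 : ℂ) := by
        rw [← hg'0]
        exact Lp.coeFn_zero (E := ℂ) (p := 2) (μ := μ)
      filter_upwards [hg'eq, hg'c] with t h1 h2
      rw [← h1, h2]
    have E2 : ∀ᵐ t ∂μ, (h : AddCircle T → ℂ) t + (k : AddCircle T → ℂ) t
        = conj (θ11 t) * (v1 : AddCircle T → ℂ) t + conj (θ12 t) * (v2 : AddCircle T → ℂ) t := by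
      filter_upwards [hh'eq, Lp.coeFn_sub h' h] with t h1 h2
      rw [hk]
      calc (h : AddCircle T → ℂ) t + (⇑(h' - h)) t
          = (h : AddCircle T → ℂ) t + ((h' : AddCircle T → ℂ) t - (h : AddCircle T → ℂ) t) := by
            rw [h2]; rfl
        _ = (h' : AddCircle T → ℂ) t := by ring
        _ = _ := h1
    have hbw : ∀ᵐ t ∂μ, θ12 t * (v1 : AddCircle T → ℂ) t = θ11 t * (v2 : AddCircle T → ℂ) t := by
      filter_upwards [hu2, hu3, E1] with t a2 a3 e1
      exact ptwise a2 a3 e1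
    have hsum : ∀ᵐ t ∂μ, conj (θ11 t) * θ11 t + conj (θ12 t) * θ12 t = 1 := by
      filter_upwards [hu1] with t a1
      rw [conj_mul_self, conj_mul_self, ← Complex.ofReal_add, a1, Complex.ofReal_one]
    have F1 : (fun t => θ11 t * (h : AddCircle T → ℂ) t + θ11 t * (k : AddCircle T → ℂ) t)
        =ᵐ[μ] ⇑v1 := by
      filter_upwards [E2, hbw, hsum] with t hS hb hs
      linear_combination θ11 t * hS - conj (θ12 t) * hb + (v1 : AddCircle T → ℂ) t * hs
    have F2 : (fun t => θ12 t * (h : AddCircle T → ℂ) t + θ12 t * (k : AddCircle T → ℂ) t)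
        =ᵐ[μ] ⇑v2 := by
      filter_upwards [E2, hbw, hsum] with t hS hb hs
      linear_combination θ12 t * hS + conj (θ11 t) * hb + (v2 : AddCircle T → ℂ) t * hs
    intro n hn
    constructor
    · have h1 := fourierCoeff_fun_add (memL2_mul_of_bound h11.meas h11.bound h)
        (memL2_mul_of_bound h11.meas h11.bound k) n
      rw [fourierCoeff_congr_ae F1, coeff_zero_of_mem_H2 hv1H hn,
        coeff_mul_zero h11 hkH hn, add_zero] at h1
      exact h1.symm
    · have h1 := fourierCoeff_fun_add (memL2_mul_of_bound h12.meas h12.bound h)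
        (memL2_mul_of_bound h12.meas h12.bound k) n
      rw [fourierCoeff_congr_ae F2, coeff_zero_of_mem_H2 hv2H hn,
        coeff_mul_zero h12 hkH hn, add_zero] at h1
      exact h1.symm
  -- apply master to h = conj θ11, g = θ21
  have hm11 : MemLp (fun t => conj (θ11 t)) 2 μ :=
    memL2_of_bound hconj11 1 (by filter_upwards [h11.bound] with t ht; simpa using ht)
  have hm12 : MemLp (fun t => conj (θ12 t)) 2 μ :=
    memL2_of_bound hconj12 1 (by filter_upwards [h12.bound] with t ht; simpa using ht)
  have hm21 : MemLp θ21 2 μ := memL2_of_bound h21.meas 1 h21.bound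
  have hm22 : MemLp θ22 2 μ := memL2_of_bound h22.meas 1 h22.bound
  have hg21H : hm21.toLp θ21 ∈ H2 := by
    apply mem_H2_of_coeff
    intro n hn
    rw [fourierCoeff_congr_ae hm21.coeFn_toLp]
    exact h21.coeff n hn
  have hg22H : hm22.toLp θ22 ∈ H2 := by
    apply mem_H2_of_coeff
    intro n hn
    rw [fourierCoeff_congr_ae hm22.coeFn_toLp]
    exact h22.coeff n hn
  have case1 := master (hm11.toLp _) (hm21.toLp _) hg21H
    ⟨e0, he0H, 0, H2.zero_mem, by
      filter_upwards [hm21.coeFn_toLp, he0coe, Lp.coeFn_zero (E := ℂ) (p := 2) (μ := μ)]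
        with t h1 h2 h3
      rw [h1, h2]
      simp [h3], by
      filter_upwards [hm11.coeFn_toLp, he0coe, Lp.coeFn_zero (E := ℂ) (p := 2) (μ := μ)]
        with t h1 h2 h3
      rw [h1, h2]
      simp [h3]⟩
  have case2 := master (hm12.toLp _) (hm22.toLp _) hg22H
    ⟨0, H2.zero_mem, e0, he0H, by
      filter_upwards [hm22.coeFn_toLp, he0coe, Lp.coeFn_zero (E := ℂ) (p := 2) (μ := μ)]
        with t h1 h2 h3
      rw [h1, h2]
      simp [h3], by
      filter_upwards [hm12.coeFn_toLp, he0coe, Lp.coeFn_zero (E := ℂ) (p := 2) (μ := μ)]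
        with t h1 h2 h3
      rw [h1, h2]
      simp [h3]⟩
  -- coefficient vanishing for the four products
  have cA : ∀ n : ℤ, n < 0 → fourierCoeff (fun t => θ11 t * conj (θ11 t)) n = 0 := by
    intro n hn
    rw [fourierCoeff_congr_ae (g := fun t => θ11 t * (hm11.toLp _ : AddCircle T → ℂ) t)
      (by filter_upwards [hm11.coeFn_toLp] with t ht; rw [ht])]
    exact (case1 n hn).1
  have cB : ∀ n : ℤ, n < 0 → fourierCoeff (fun t => θ12 t * conj (θ11 t)) n = 0 := by
    intro n hn
    rw [fourierCoeff_congr_ae (g := fun t => θ12 t * (hm11.toLp _ : AddCircle T → ℂ) t)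
      (by filter_upwards [hm11.coeFn_toLp] with t ht; rw [ht])]
    exact (case1 n hn).2
  have cC : ∀ n : ℤ, n < 0 → fourierCoeff (fun t => θ11 t * conj (θ12 t)) n = 0 := by
    intro n hn
    rw [fourierCoeff_congr_ae (g := fun t => θ11 t * (hm12.toLp _ : AddCircle T → ℂ) t)
      (by filter_upwards [hm12.coeFn_toLp] with t ht; rw [ht])]
    exact (case2 n hn).1
  have cD : ∀ n : ℤ, n < 0 → fourierCoeff (fun t => θ12 t * conj (θ12 t)) n = 0 := by
    intro n hn
    rw [fourierCoeff_congr_ae (g := fun t => θ12 t * (hm12.toLp _ : AddCircle T → ℂ) t)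
      (by filter_upwards [hm12.coeFn_toLp] with t ht; rw [ht])]
    exact (case2 n hn).2
  -- A := θ11 conj θ11 is a.e. constant
  have hmA : MemLp (fun t => θ11 t * conj (θ11 t)) 2 μ := by
    refine memL2_of_bound (h11.meas.mul hconj11) 1 ?_
    filter_upwards [h11.bound] with t ht
    rw [norm_mul, RCLike.norm_conj]
    exact mul_le_one₀ ht (norm_nonneg _) ht
  have hmB : MemLp (fun t => θ12 t * conj (θ11 t)) 2 μ := by
    refine memL2_of_bound (h12.meas.mul hconj11) 1 ?_
    filter_upwards [h11.bound, h12.bound] with t ht1 ht2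
    rw [norm_mul, RCLike.norm_conj]
    exact mul_le_one₀ ht2 (norm_nonneg _) ht1
  have hApos : ∀ n : ℤ, 0 < n → fourierCoeff (fun t => θ11 t * conj (θ11 t)) n = 0 := by
    intro n hn
    have h1 := fourierCoeff_conj (fun t => θ11 t * conj (θ11 t)) n
    have h2 : (fun t => conj ((fun s => θ11 s * conj (θ11 s)) t))
        =ᵐ[μ] fun t => θ11 t * conj (θ11 t) := by
      refine Filter.Eventually.of_forall fun t => ?_
      simp only [map_mul, Complex.conj_conj]
      ring
    rw [fourierCoeff_congr_ae h2] at h1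
    rw [h1, cA (-n) (by omega), map_zero]
  have hBpos : ∀ n : ℤ, 0 < n → fourierCoeff (fun t => θ12 t * conj (θ11 t)) n = 0 := by
    intro n hn
    have h1 := fourierCoeff_conj (fun t => θ11 t * conj (θ12 t)) n
    have h2 : (fun t => conj ((fun s => θ11 s * conj (θ12 s)) t))
        =ᵐ[μ] fun t => θ12 t * conj (θ11 t) := by
      refine Filter.Eventually.of_forall fun t => ?_
      simp only [map_mul, Complex.conj_conj]
      ring
    rw [fourierCoeff_congr_ae h2] at h1
    rw [h1, cC (-n) (by omega), map_zero]
  obtain ⟨α, hA⟩ := ae_const_of_coeff hmA (fun n hn => by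
    rcases lt_or_gt_of_ne hn with h | h
    · exact cA n h
    · exact hApos n h)
  obtain ⟨c, hB⟩ := ae_const_of_coeff hmB (fun n hn => by
    rcases lt_or_gt_of_ne hn with h | h
    · exact cB n h
    · exact hBpos n h)
  -- final contradiction
  by_cases hα : α = 0
  · refine hnp2 0 ?_
    filter_upwards [hA] with t ht
    rw [hα] at ht
    have : ((‖θ11 t‖ ^ 2 : ℝ) : ℂ) = 0 := by rw [← conj_mul_self]; linear_combination ht
    have h0 : ‖θ11 t‖ = 0 := by
      have := Complex.ofReal_eq_zero.mp this
      nlinarith [norm_nonneg (θ11 t)]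
    rw [norm_eq_zero] at h0
    rw [h0, zero_mul]
  · refine hnp1 (c / α) ?_
    filter_upwards [hA, hB] with t h1 h2
    field_simp
    linear_combination θ11 t * h2 - θ12 t * h1

end SS
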